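/- Let B be a free Abelian group (a free ℤ-module) and let A be a subgroup of B (so A is itself free). Then the quotient group B/A is a free ℤ-module if and only if every basis of A extends to a basis of B, i.e., for every ℤ-basis E of A (viewed as a subset of B) there exists a ℤ-basis F of B with E ⊆ F. -/

import Mathlib

/-!
If `B ⧸ A` is free it is projective, so `A` has a complement `C ≅ B ⧸ A` in `B`, and a basis of
`A` together with a basis of `C` is a basis of `B`. Conversely, `A` has some basis `E`, and if `E`
extends to a basis `F` of `B` then `span (F \ E)` is a free complement of `A`, isomorphic to
`B ⧸ A`.

That `A` has a basis at all is the classical argument for submodules of free modules over a PID: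
well-order a basis of `B` and, for each index `i`, pick an element of `A` supported in `Iic i`
whose `i`-th coordinate generates the ideal of all such coordinates. The nonzero-diagonal ones form
a triangular, hence independent, family, and they span `A` by well-founded induction on `i`.
-/

open Submodule Finsupp Set

theorem Finsupp.mem_supported_Iic_max' {ι R : Type*} [LinearOrder ι] [Semiring R] (x : ι →₀ R)
    (hx : x.support.Nonempty) : x ∈ supported R R (Iic (x.support.max' hx)) :=
  fun j hj => x.support.le_max' j hj

theorem Finsupp.linearIndepOn_of_triangular {ι R : Type*} [LinearOrder ι] [Ring R]
    [NoZeroDivisors R] {v : ι → ι →₀ R} {s : Set ι} (hdiag : ∀ i ∈ s, v i i ≠ 0)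
    (hlt : ∀ i j, i < j → v i j = 0) : LinearIndepOn R v s := by
  rw [linearIndepOn_iff]
  intro l hl hzero
  by_contra hl0
  have hne : l.support.Nonempty := Finsupp.support_nonempty_iff.2 hl0
  set i := l.support.max' hne
  have hi : i ∈ l.support := l.support.max'_mem hne
  have hcoord : (linearCombination R v l) i = l i * v i i := by
    rw [linearCombination_apply, Finsupp.sum_apply, Finsupp.sum, Finset.sum_eq_single i]
    · rfl
    · intro j hj hji
      simp [hlt j i (lt_of_le_of_ne (l.support.le_max' j hj) hji)]
    · simp [hi]
  rw [hzero, Finsupp.zero_apply, eq_comm] at hcoord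
  exact mul_ne_zero (Finsupp.mem_support_iff.1 hi) (hdiag i (hl hi)) hcoord

section Ring

variable {R M : Type*} [Ring R] [AddCommGroup M] [Module R M]

theorem Module.Free.span_of_linearIndepOn_id {s : Set M} (hs : LinearIndepOn R id s) :
    Module.Free R (span R s) := by
  have := Module.Free.of_basis (Module.Basis.span hs)
  rwa [show (fun x : s => id (x : M)) = (↑) from rfl, Subtype.range_coe] at this

theorem Submodule.exists_linearIndepOn_id_span_eq (A : Submodule R M) [Module.Free R A] :
    ∃ E ⊆ (A : Set M), LinearIndepOn R id E ∧ span R E = A := by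
  let b := Module.Free.chooseBasis R A
  refine ⟨range (A.subtype ∘ b), ?_,
    (b.linearIndependent.map' _ A.ker_subtype).linearIndepOn_id, ?_⟩
  · rintro _ ⟨i, rfl⟩
    exact (b i).2
  · rw [range_comp, span_image, b.span_eq, map_subtype_top]

theorem LinearIndepOn.isCompl_span_diff {E F : Set M} (hEF : E ⊆ F) (hF : LinearIndepOn R id F)
    (hFspan : span R F = ⊤) : IsCompl (span R E) (span R (F \ E)) := by
  rw [← union_sdiff_cancel hEF] at hF hFspan
  refine ⟨((linearIndepOn_id_union_iff disjoint_sdiff_right).1 hF).2.2, ?_⟩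
  rw [codisjoint_iff, ← span_union, hFspan]

theorem Submodule.exists_isCompl_of_projective_quotient (A : Submodule R M)
    [Module.Projective R (M ⧸ A)] : ∃ C : Submodule R M, IsCompl A C := by
  obtain ⟨s, hs⟩ := A.mkQ.exists_rightInverse_of_surjective A.range_mkQ
  have hsec : Function.LeftInverse A.mkQ s := LinearMap.congr_fun hs
  have hidem : IsIdempotentElem (s ∘ₗ A.mkQ) :=
    LinearMap.ext fun x => congrArg s (hsec (A.mkQ x))
  have hker : LinearMap.ker (s ∘ₗ A.mkQ) = A := by
    rw [LinearMap.ker_comp_of_ker_eq_bot _ (LinearMap.ker_eq_bot.2 hsec.injective), ker_mkQ]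
  exact ⟨_, hker ▸ (LinearMap.IsIdempotentElem.isCompl hidem).symm⟩

end Ring

namespace Submodule

noncomputable def leadingCoeffIdeal {ι R : Type*} [Preorder ι] [Semiring R]
    (N : Submodule R (ι →₀ R)) (i : ι) : Ideal R :=
  (N ⊓ supported R R (Iic i)).map (lapply i)

variable {ι R : Type*} [LinearOrder ι] [WellFoundedLT ι] [Ring R] {N : Submodule R (ι →₀ R)}

theorem mem_span_of_leadingCoeffIdeal_eq_span {e : ι → ι →₀ R}
    (he : ∀ i, e i ∈ N ⊓ supported R R (Iic i))
    (hgen : ∀ i, N.leadingCoeffIdeal i = Ideal.span {e i i}) (i : ι) :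
    ∀ x ∈ N ⊓ supported R R (Iic i), x ∈ span R (e '' {j | e j j ≠ 0}) := by
  induction i using WellFoundedLT.induction with
  | _ i ih =>
  have of_apply_eq_zero : ∀ y ∈ N ⊓ supported R R (Iic i), y i = 0 →
      y ∈ span R (e '' {j | e j j ≠ 0}) := by
    intro y hy hyi
    by_cases hy0 : y = 0
    · rw [hy0]; exact zero_mem _
    have hne := Finsupp.support_nonempty_iff.2 hy0
    have hmax_mem := y.support.max'_mem hne
    have hlt : y.support.max' hne < i := by
      refine lt_of_le_of_ne ((mem_supported _ _).1 (mem_inf.1 hy).2 hmax_mem) ?_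
      rintro h
      exact Finsupp.mem_support_iff.1 hmax_mem (h ▸ hyi)
    exact ih _ hlt y ⟨(mem_inf.1 hy).1, mem_supported_Iic_max' y hne⟩
  intro x hx
  obtain ⟨m, hm⟩ : ∃ m, m * e i i = x i :=
    Ideal.mem_span_singleton'.1 (hgen i ▸ mem_map_of_mem hx)
  by_cases hei : e i i = 0
  · exact of_apply_eq_zero x hx (by rw [← hm, hei, mul_zero])
  have hy : x - m • e i ∈ span R (e '' {j | e j j ≠ 0}) :=
    of_apply_eq_zero _ (sub_mem hx (smul_mem _ m (he i))) (by simp [← hm])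
  simpa using add_mem hy (smul_mem _ m (subset_span ⟨i, hei, rfl⟩))

variable [NoZeroDivisors R] [IsPrincipalIdealRing R]

theorem free_of_pid_finsupp (N : Submodule R (ι →₀ R)) : Module.Free R N := by
  have hlead (i : ι) : ∃ x ∈ N ⊓ supported R R (Iic i),
      x i = IsPrincipal.generator (N.leadingCoeffIdeal i) :=
    mem_map.1 (IsPrincipal.generator_mem (N.leadingCoeffIdeal i))
  choose e he hgen using hlead
  have hspan : span R (e '' {j | e j j ≠ 0}) = N := by
    refine le_antisymm (span_le.2 ?_) fun x hx => ?_
    · rintro _ ⟨i, -, rfl⟩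
      exact (mem_inf.1 (he i)).1
    by_cases hx0 : x = 0
    · rw [hx0]; exact zero_mem _
    have hne := Finsupp.support_nonempty_iff.2 hx0
    refine mem_span_of_leadingCoeffIdeal_eq_span he (fun i => ?_) _ x
      ⟨hx, mem_supported_Iic_max' x hne⟩
    rw [hgen, Ideal.span_singleton_generator]
  have hli : LinearIndepOn R e {j | e j j ≠ 0} :=
    Finsupp.linearIndepOn_of_triangular (fun _ hi => hi) fun i j hij =>
      Finsupp.notMem_support_iff.1 fun hj => not_le.2 hij ((mem_inf.1 (he i)).2 hj)
  exact hspan ▸ Module.Free.span_of_linearIndepOn_id hli.id_image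

end Submodule

theorem Submodule.free_of_pid {R M : Type*} [Ring R] [NoZeroDivisors R]
    [IsPrincipalIdealRing R] [AddCommGroup M] [Module R M] [Module.Free R M]
    (N : Submodule R M) : Module.Free R N := by
  let b := Module.Free.chooseBasis R M
  let _ : LinearOrder (Module.Free.ChooseBasisIndex R M) := IsWellOrder.linearOrder WellOrderingRel
  have : WellFoundedLT (Module.Free.ChooseBasisIndex R M) := ⟨WellOrderingRel.isWellOrder.wf⟩
  have := free_of_pid_finsupp (N.map b.repr.toLinearMap)
  exact .of_equiv (b.repr.submoduleMap N).symm

/-- For a free Abelian group `B` and a subgroup (ℤ-submodule) `A` of `B`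
(which is automatically free), the quotient `B ⧸ A` is a free `ℤ`-module if
and only if every basis of `A` (viewed as a subset of `B`) extends to a basis
of `B`. -/
theorem quotient_free_iff_every_basis_extends
    (B : Type*) [AddCommGroup B] [Module.Free ℤ B] (A : Submodule ℤ B) :
    Module.Free ℤ (B ⧸ A) ↔
      ∀ E : Set B, E ⊆ (A : Set B) →
        LinearIndependent ℤ ((↑) : E → B) → Submodule.span ℤ E = A →
        ∃ F : Set B, E ⊆ F ∧ LinearIndependent ℤ ((↑) : F → B) ∧
          Submodule.span ℤ F = ⊤ := by
  constructor
  · intro _ E _ hE hEspan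
    obtain ⟨C, hAC⟩ := A.exists_isCompl_of_projective_quotient
    have : Module.Free ℤ C := .of_equiv (A.quotientEquivOfIsCompl C hAC)
    obtain ⟨G, -, hG, hGspan⟩ := C.exists_linearIndepOn_id_span_eq
    refine ⟨E ∪ G, subset_union_left, LinearIndepOn.id_union hE hG ?_, ?_⟩
    · rw [hEspan, hGspan]
      exact hAC.disjoint
    · rw [span_union, hEspan, hGspan]
      exact hAC.codisjoint.eq_top
  · intro hextend
    have := A.free_of_pid
    obtain ⟨E, hEA, hE, hEspan⟩ := A.exists_linearIndepOn_id_span_eq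
    obtain ⟨F, hEF, hF, hFspan⟩ := hextend E hEA hE hEspan
    have hAC : IsCompl A (span ℤ (F \ E)) :=
      hEspan ▸ LinearIndepOn.isCompl_span_diff hEF hF hFspan
    have : Module.Free ℤ (span ℤ (F \ E)) :=
      Module.Free.span_of_linearIndepOn_id (LinearIndepOn.mono hF sdiff_subset)
    exact .of_equiv (A.quotientEquivOfIsCompl _ hAC).symm
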